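/- arXiv:2510.15431 — 3 statements merged into one kernel-verified Lean document; each statement's English description precedes it below -/
import Mathlib

section
/- Let W be continuous, nonnegative, with zeros exactly {a,b}, a < b, and 1/√W locally integrable. For α ∈ [a,b] define Ψ_α(x) = ∫_α^x W(s)^{-1/2} ds and T^(α) = Ψ_α(b). Then the function z_α defined by z_α(t) = Ψ_α^{-1}(t) for t ∈ [0, T^(α)] and z_α(t) = b for t > T^(α) is C¹ on [0,∞), takes values in [a,b], satisfies z_α(0) = α and z_α'(t) = √(W(z_α(t))) for every t ≥ 0. -/
/-!
Since `W > 0` on `(a, b)`, `Ψ_α` is a continuous strictly increasing bijection of `[a, b]`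
onto `[Ψ_α(a), T^(α)]` with derivative `W^{-1/2}` inside, so the inverse function theorem gives
`z' = √(W z)` while `z` stays in `(a, b)`. Everything else rests on one estimate: if `√W ≤ c`
between two points of `[a, b]`, their distance is at most `c` times the difference of their
`Ψ_α`-values. With `c = max √W` it makes `z` Lipschitz; with `c = ε` near a zero of `W` it
gives `|z s - z t| ≤ ε |s - t|`, i.e. `z' = 0 = √(W z)` at the wells.
-/

open Real Set Filter Topology MeasureTheory intervalIntegral Function

theorem sub_le_mul_integral_inv {g : ℝ → ℝ} {u v c : ℝ} (huv : u ≤ v)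
    (hg : IntervalIntegrable (fun x => (g x)⁻¹) volume u v)
    (hpos : ∀ x ∈ Ioo u v, 0 < g x) (hle : ∀ x ∈ Ioo u v, g x ≤ c) :
    v - u ≤ c * ∫ x in u..v, (g x)⁻¹ := by
  rcases huv.eq_or_lt with rfl | huv
  · simp
  obtain ⟨x, hx⟩ := nonempty_Ioo.2 huv
  have hc : 0 < c := (hpos x hx).trans_le (hle x hx)
  calc v - u = c * ∫ _ in u..v, c⁻¹ := by simp [field]
    _ ≤ c * ∫ x in u..v, (g x)⁻¹ := by
      gcongr
      exact integral_mono_on_of_le_Ioo huv.le intervalIntegrable_const hg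
        fun x hx => inv_anti₀ (hpos x hx) (hle x hx)

theorem contDiffOn_one_of_hasDerivWithinAt {f f' : ℝ → ℝ} {s : Set ℝ}
    (hs : UniqueDiffOn ℝ s) (hf : ∀ x ∈ s, HasDerivWithinAt f (f' x) s x)
    (hf' : ContinuousOn f' s) :
    ContDiffOn ℝ 1 f s := by
  rw [contDiffOn_one_iff_derivWithin hs]
  exact ⟨fun x hx => (hf x hx).differentiableWithinAt,
    hf'.congr fun x hx => (hf x hx).derivWithin (hs x hx)⟩

structure IsDoubleWell (W : ℝ → ℝ) (a b : ℝ) : Prop where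
  lt : a < b
  continuous : Continuous W
  nonneg : ∀ x, 0 ≤ W x
  eq_zero_iff : ∀ x, W x = 0 ↔ x = a ∨ x = b
  intervalIntegrable_inv_sqrt : IntervalIntegrable (fun s => (√(W s))⁻¹) volume a b

/-- `Ψ_α(x)`: the time the flow `z' = √(W z)` needs to go from `α` to `x`. -/
noncomputable def travelTime (W : ℝ → ℝ) (α x : ℝ) : ℝ :=
  ∫ s in α..x, (√(W s))⁻¹

/-- `z_α(t) = Ψ_α⁻¹(min t T^(α))`, with `Ψ_α` inverted on `[a, b]`; meaningful for
`t ≥ Ψ_α(a)`. -/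
noncomputable def trajectory (W : ℝ → ℝ) (a b α t : ℝ) : ℝ :=
  invFunOn (travelTime W α) (Icc a b) (min t (travelTime W α b))

@[simp]
theorem travelTime_self (W : ℝ → ℝ) (α : ℝ) : travelTime W α α = 0 :=
  integral_same

namespace IsDoubleWell

variable {W : ℝ → ℝ} {a b α : ℝ}

theorem pos (hW : IsDoubleWell W a b) {x : ℝ} (hx : x ∈ Ioo a b) : 0 < W x :=
  (hW.nonneg x).lt_of_ne' fun h => by
    rcases (hW.eq_zero_iff x).1 h with rfl | rfl <;> simp at hx

theorem intervalIntegrable (hW : IsDoubleWell W a b) {u v : ℝ} (hu : u ∈ Icc a b)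
    (hv : v ∈ Icc a b) : IntervalIntegrable (fun s => (√(W s))⁻¹) volume u v :=
  hW.intervalIntegrable_inv_sqrt.mono_set (by rw [uIcc_of_le hW.lt.le]; exact uIcc_subset_Icc hu hv)

theorem travelTime_sub (hW : IsDoubleWell W a b) (hα : α ∈ Icc a b) {u v : ℝ}
    (hu : u ∈ Icc a b) (hv : v ∈ Icc a b) :
    travelTime W α v - travelTime W α u = ∫ s in u..v, (√(W s))⁻¹ :=
  integral_interval_sub_left (hW.intervalIntegrable hα hv) (hW.intervalIntegrable hα hu)

theorem strictMonoOn_travelTime (hW : IsDoubleWell W a b) (hα : α ∈ Icc a b) :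
    StrictMonoOn (travelTime W α) (Icc a b) := fun u hu v hv huv => by
  rw [← sub_pos, hW.travelTime_sub hα hu hv]
  exact intervalIntegral_pos_of_pos_on (hW.intervalIntegrable hu hv)
    (fun x hx => inv_pos.2 (sqrt_pos.2 (hW.pos ⟨hu.1.trans_lt hx.1, hx.2.trans_le hv.2⟩))) huv

theorem continuousOn_travelTime (hW : IsDoubleWell W a b) (hα : α ∈ Icc a b) :
    ContinuousOn (travelTime W α) (Icc a b) := by
  have h := continuousOn_primitive_interval' hW.intervalIntegrable_inv_sqrt
    (by rwa [uIcc_of_le hW.lt.le])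
  rw [uIcc_of_le hW.lt.le] at h
  exact h

theorem hasDerivAt_travelTime (hW : IsDoubleWell W a b) (hα : α ∈ Icc a b) {x : ℝ}
    (hx : x ∈ Ioo a b) : HasDerivAt (travelTime W α) (√(W x))⁻¹ x := by
  have hcont : ContinuousOn (fun s => (√(W s))⁻¹) (Ioo a b) := fun y hy =>
    ((continuous_sqrt.comp hW.continuous).continuousAt.inv₀
      (sqrt_pos.2 (hW.pos hy)).ne').continuousWithinAt
  exact integral_hasDerivAt_right (hW.intervalIntegrable hα (Ioo_subset_Icc_self hx))
    (hcont.stronglyMeasurableAtFilter isOpen_Ioo x hx) (hcont.continuousAt (isOpen_Ioo.mem_nhds hx))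

theorem abs_sub_le_mul_abs_travelTime_sub (hW : IsDoubleWell W a b) (hα : α ∈ Icc a b)
    {u v c : ℝ} (hu : u ∈ Icc a b) (hv : v ∈ Icc a b)
    (hc : ∀ x ∈ uIcc u v, √(W x) ≤ c) :
    |v - u| ≤ c * |travelTime W α v - travelTime W α u| := by
  wlog huv : u ≤ v generalizing u v
  · rw [abs_sub_comm, abs_sub_comm (travelTime W α v)]
    exact this hv hu (by rwa [uIcc_comm]) (le_of_not_ge huv)
  rw [abs_of_nonneg (sub_nonneg.2 huv),
    abs_of_nonneg (sub_nonneg.2 ((hW.strictMonoOn_travelTime hα).monotoneOn hu hv huv)),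
    hW.travelTime_sub hα hu hv]
  refine sub_le_mul_integral_inv huv (hW.intervalIntegrable hu hv)
    (fun x hx => sqrt_pos.2 (hW.pos ⟨hu.1.trans_lt hx.1, hx.2.trans_le hv.2⟩))
    fun x hx => hc x ?_
  rw [uIcc_of_le huv]
  exact Ioo_subset_Icc_self hx

theorem min_mem_image_travelTime (hW : IsDoubleWell W a b) (hα : α ∈ Icc a b) {t : ℝ}
    (ht : travelTime W α a ≤ t) :
    min t (travelTime W α b) ∈ travelTime W α '' Icc a b :=
  intermediate_value_Icc hW.lt.le (hW.continuousOn_travelTime hα)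
    ⟨le_min ht ((hW.strictMonoOn_travelTime hα).monotoneOn ⟨le_rfl, hW.lt.le⟩
      ⟨hW.lt.le, le_rfl⟩ hW.lt.le), min_le_right _ _⟩

theorem trajectory_mem_Icc (hW : IsDoubleWell W a b) (hα : α ∈ Icc a b) {t : ℝ}
    (ht : travelTime W α a ≤ t) : trajectory W a b α t ∈ Icc a b :=
  invFunOn_mem (hW.min_mem_image_travelTime hα ht)

theorem travelTime_trajectory (hW : IsDoubleWell W a b) (hα : α ∈ Icc a b) {t : ℝ}
    (ht : travelTime W α a ≤ t) :
    travelTime W α (trajectory W a b α t) = min t (travelTime W α b) :=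
  invFunOn_eq (hW.min_mem_image_travelTime hα ht)

theorem travelTime_le_zero (hW : IsDoubleWell W a b) (hα : α ∈ Icc a b) :
    travelTime W α a ≤ 0 :=
  travelTime_self W α ▸
    (hW.strictMonoOn_travelTime hα).monotoneOn ⟨le_rfl, hW.lt.le⟩ hα hα.1

theorem trajectory_zero (hW : IsDoubleWell W a b) (hα : α ∈ Icc a b) :
    trajectory W a b α 0 = α := by
  refine (hW.strictMonoOn_travelTime hα).injOn (hW.trajectory_mem_Icc hα
    (hW.travelTime_le_zero hα)) hα ?_
  rw [hW.travelTime_trajectory hα (hW.travelTime_le_zero hα), travelTime_self, min_eq_left]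
  exact travelTime_self W α ▸ (hW.strictMonoOn_travelTime hα).monotoneOn hα
    ⟨hW.lt.le, le_rfl⟩ hα.2

theorem trajectory_eq_of_travelTime_le (hW : IsDoubleWell W a b) (hα : α ∈ Icc a b) {t : ℝ}
    (ht : travelTime W α b ≤ t) : trajectory W a b α t = b := by
  have hat : travelTime W α a ≤ t := ((hW.strictMonoOn_travelTime hα).monotoneOn
    ⟨le_rfl, hW.lt.le⟩ ⟨hW.lt.le, le_rfl⟩ hW.lt.le).trans ht
  refine (hW.strictMonoOn_travelTime hα).injOn (hW.trajectory_mem_Icc hα hat)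
    ⟨hW.lt.le, le_rfl⟩ ?_
  rw [hW.travelTime_trajectory hα hat, min_eq_right ht]

theorem abs_trajectory_sub_le (hW : IsDoubleWell W a b) (hα : α ∈ Icc a b) {s t c : ℝ}
    (hs : travelTime W α a ≤ s) (ht : travelTime W α a ≤ t)
    (hc : ∀ x ∈ uIcc (trajectory W a b α t) (trajectory W a b α s), √(W x) ≤ c) :
    |trajectory W a b α s - trajectory W a b α t| ≤ c * |s - t| := by
  have hc₀ : 0 ≤ c := (sqrt_nonneg _).trans (hc _ left_mem_uIcc)
  calc |trajectory W a b α s - trajectory W a b α t|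
      ≤ c * |travelTime W α (trajectory W a b α s) - travelTime W α (trajectory W a b α t)| :=
        hW.abs_sub_le_mul_abs_travelTime_sub hα (hW.trajectory_mem_Icc hα ht)
          (hW.trajectory_mem_Icc hα hs) hc
    _ = c * |min s (travelTime W α b) - min t (travelTime W α b)| := by
        rw [hW.travelTime_trajectory hα hs, hW.travelTime_trajectory hα ht]
    _ ≤ c * |s - t| := by
        refine mul_le_mul_of_nonneg_left ((abs_min_sub_min_le_max s _ t _).trans ?_) hc₀
        simp

theorem continuousOn_trajectory (hW : IsDoubleWell W a b) (hα : α ∈ Icc a b) :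
    ContinuousOn (trajectory W a b α) (Ici (travelTime W α a)) := by
  obtain ⟨M, hM⟩ := isCompact_Icc.bddAbove_image
    (continuous_sqrt.comp hW.continuous).continuousOn (K := Icc a b)
  refine (LipschitzOnWith.of_dist_le' (K := M) fun s hs t ht => ?_).continuousOn
  rw [dist_eq, dist_eq]
  exact hW.abs_trajectory_sub_le hα hs ht fun x hx => hM (mem_image_of_mem _
    (uIcc_subset_Icc (hW.trajectory_mem_Icc hα ht) (hW.trajectory_mem_Icc hα hs) hx))

theorem hasDerivAt_trajectory_of_mem_Ioo (hW : IsDoubleWell W a b) (hα : α ∈ Icc a b) {t : ℝ}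
    (ht : travelTime W α a ≤ t) (hz : trajectory W a b α t ∈ Ioo a b) :
    HasDerivAt (trajectory W a b α) (√(W (trajectory W a b α t))) t := by
  have hmono := hW.strictMonoOn_travelTime hα
  have hzt := hW.travelTime_trajectory hα ht
  have hat : travelTime W α a < t :=
    (hmono ⟨le_rfl, hW.lt.le⟩ (Ioo_subset_Icc_self hz) hz.1).trans_le (hzt ▸ min_le_left _ _)
  have htb : t < travelTime W α b := by
    have := hmono (Ioo_subset_Icc_self hz) ⟨hW.lt.le, le_rfl⟩ hz.2
    rw [hzt, min_lt_iff] at this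
    exact this.resolve_right (lt_irrefl _)
  have hinv : ∀ᶠ y in 𝓝 t, travelTime W α (trajectory W a b α y) = y := by
    filter_upwards [Ioo_mem_nhds hat htb] with y hy
    rw [hW.travelTime_trajectory hα hy.1.le, min_eq_left hy.2.le]
  simpa using HasDerivAt.of_local_left_inverse
    ((hW.continuousOn_trajectory hα).continuousAt (Ici_mem_nhds hat))
    (hW.hasDerivAt_travelTime hα hz) (inv_ne_zero (sqrt_pos.2 (hW.pos hz)).ne') hinv

theorem hasDerivWithinAt_trajectory_of_eq_zero (hW : IsDoubleWell W a b) (hα : α ∈ Icc a b)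
    {t : ℝ} (ht : travelTime W α a ≤ t) (hz : W (trajectory W a b α t) = 0) :
    HasDerivWithinAt (trajectory W a b α) 0 (Ici (travelTime W α a)) t := by
  rw [hasDerivWithinAt_iff_isLittleO, Asymptotics.isLittleO_iff]
  intro ε hε
  have hsmall : ∀ᶠ x in 𝓝 (trajectory W a b α t), √(W x) ≤ ε := by
    have := (continuous_sqrt.comp hW.continuous).tendsto (trajectory W a b α t)
    simp only [comp_apply, hz, sqrt_zero] at this
    exact this.eventually (eventually_le_nhds hε)
  obtain ⟨δ, hδ, hball⟩ := Metric.eventually_nhds_iff_ball.1 hsmall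
  filter_upwards [self_mem_nhdsWithin,
    hW.continuousOn_trajectory hα t ht (Metric.ball_mem_nhds _ hδ)] with s hs hzs
  simpa using hW.abs_trajectory_sub_le hα hs ht fun x hx =>
    hball x ((convex_ball _ _).ordConnected.uIcc_subset (Metric.mem_ball_self hδ) hzs hx)

theorem hasDerivWithinAt_trajectory (hW : IsDoubleWell W a b) (hα : α ∈ Icc a b) {t : ℝ}
    (ht : travelTime W α a ≤ t) :
    HasDerivWithinAt (trajectory W a b α) (√(W (trajectory W a b α t)))
      (Ici (travelTime W α a)) t := by
  by_cases hz : W (trajectory W a b α t) = 0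
  · rw [hz, sqrt_zero]
    exact hW.hasDerivWithinAt_trajectory_of_eq_zero hα ht hz
  · obtain ⟨hza, hzb⟩ := hW.trajectory_mem_Icc hα ht
    have hne := not_or.1 (mt (hW.eq_zero_iff _).2 hz)
    exact (hW.hasDerivAt_trajectory_of_mem_Ioo hα ht
      ⟨hza.lt_of_ne (Ne.symm hne.1), hzb.lt_of_ne hne.2⟩).hasDerivWithinAt

end IsDoubleWell

theorem cauchy_problem_solution_exists_general (W : ℝ → ℝ) (a b α : ℝ)
    (hab : a < b) (hα : α ∈ Icc a b)
    (hWc : Continuous W) (hWnn : ∀ x, 0 ≤ W x)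
    (hzeros : ∀ x, W x = 0 ↔ x = a ∨ x = b)
    (hint : IntervalIntegrable (fun s => (Real.sqrt (W s))⁻¹) volume a b) :
    ∃ z : ℝ → ℝ,
      (∀ t ∈ Ici (0:ℝ), z t ∈ Icc a b) ∧
      z 0 = α ∧
      ContDiffOn ℝ 1 z (Ici 0) ∧
      (∀ t ∈ Ici (0:ℝ), HasDerivWithinAt z (Real.sqrt (W (z t))) (Ici 0) t) ∧
      (∀ t ∈ Icc (0:ℝ) (∫ s in α..b, (Real.sqrt (W s))⁻¹),
        (∫ s in α..(z t), (Real.sqrt (W s))⁻¹) = t) ∧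
      (∀ t, (∫ s in α..b, (Real.sqrt (W s))⁻¹) < t → z t = b) := by
  have hW : IsDoubleWell W a b := ⟨hab, hWc, hWnn, hzeros, hint⟩
  have h0 := hW.travelTime_le_zero hα
  have hderiv : ∀ t ∈ Ici (0:ℝ),
      HasDerivWithinAt (trajectory W a b α) (√(W (trajectory W a b α t))) (Ici 0) t :=
    fun t ht => (hW.hasDerivWithinAt_trajectory hα (h0.trans ht)).mono (Ici_subset_Ici.2 h0)
  refine ⟨trajectory W a b α, fun t ht => hW.trajectory_mem_Icc hα (h0.trans ht),
    hW.trajectory_zero hα, ?_, hderiv, fun t ht => ?_,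
    fun t ht => hW.trajectory_eq_of_travelTime_le hα ht.le⟩
  · exact contDiffOn_one_of_hasDerivWithinAt (uniqueDiffOn_Ici 0) hderiv
      ((continuous_sqrt.comp hW.continuous).comp_continuousOn
        ((hW.continuousOn_trajectory hα).mono (Ici_subset_Ici.2 h0)))
  · exact (hW.travelTime_trajectory hα (h0.trans ht.1)).trans (min_eq_left ht.2)

theorem cauchy_problem_solution_exists (W : ℝ → ℝ) (a b α : ℝ)
    (hab : a < b) (hα : α ∈ Icc a b)
    (hWc : Continuous W) (hWnn : ∀ x, 0 ≤ W x)
    (hzeros : ∀ x, W x = 0 ↔ x = a ∨ x = b)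
    (hint : IntervalIntegrable (fun s => (Real.sqrt (W s))⁻¹) volume a b)
    (hmono : StrictMonoOn (fun x => ∫ s in α..x, (Real.sqrt (W s))⁻¹) (Icc α b)) :
    ∃ z : ℝ → ℝ,
      (∀ t ∈ Ici (0:ℝ), z t ∈ Icc a b) ∧
      z 0 = α ∧
      ContDiffOn ℝ 1 z (Ici 0) ∧
      (∀ t ∈ Ici (0:ℝ), HasDerivWithinAt z (Real.sqrt (W (z t))) (Ici 0) t) ∧
      (∀ t ∈ Icc (0:ℝ) (∫ s in α..b, (Real.sqrt (W s))⁻¹),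
        (∫ s in α..(z t), (Real.sqrt (W s))⁻¹) = t) ∧
      (∀ t, (∫ s in α..b, (Real.sqrt (W s))⁻¹) < t → z t = b) :=
  cauchy_problem_solution_exists_general W a b α hab hα hWc hWnn hzeros hint
end

section
/- Every minimizer v_ε of G_ε^(0) satisfies the first integral identity v_ε'(t)² = (W(v_ε(t)) + δ_ε(t))/ε² for all t ∈ [0,T], where δ_ε(t) = (1/ω(t)) [ω(0)(ε² v_ε'(0)² − W(v_ε(0))) − ε ∫_0^t ((1/ε)W(v_ε) + ε(v_ε')²) ω' ds]. -/
open Real Set Filter Topology MeasureTheory intervalIntegral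

/-!
Multiplying the Euler–Lagrange equation by `2ε²ω v'` shows that the weighted Hamiltonian
`ω (ε² v'² - W(v))` has derivative `-(W(v) + ε² v'²) ω'` on `[0, T]`. Integrating this from `0`
to `t` and dividing by `ε² ω(t)` gives the identity.
-/

theorem integral_eq_sub_of_hasDerivWithinAt_Icc {E : Type*} [NormedAddCommGroup E]
    [NormedSpace ℝ E] [CompleteSpace E] {f f' : ℝ → E} {a b t : ℝ}
    (hderiv : ∀ x ∈ Icc a b, HasDerivWithinAt f (f' x) (Icc a b) x)
    (hcont : ContinuousOn f' (Icc a b)) (ht : t ∈ Icc a b) :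
    ∫ x in a..t, f' x = f t - f a := by
  have hsub : Icc a t ⊆ Icc a b := Icc_subset_Icc le_rfl ht.2
  refine integral_eq_sub_of_hasDerivAt_of_le ht.1
    (fun x hx => ((hderiv x (hsub hx)).continuousWithinAt).mono hsub) (fun x hx => ?_)
    ((hcont.mono hsub).intervalIntegrable_of_Icc ht.1)
  exact (hderiv x (hsub (Ioo_subset_Icc_self hx))).hasDerivAt
    (Icc_mem_nhds hx.1 (hx.2.trans_le ht.2))

theorem hasDerivWithinAt_weighted_hamiltonian {W ω v v' : ℝ → ℝ} {s : Set ℝ}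
    {x ε dω dv' dW : ℝ} (hω : HasDerivWithinAt ω dω s x) (hv : HasDerivWithinAt v (v' x) s x)
    (hv' : HasDerivWithinAt v' dv' s x) (hW : HasDerivAt W dW (v x)) (hωx : ω x ≠ 0)
    (hε : ε ≠ 0) (hEL : dv' = dW / (2 * ε ^ 2) - (dω / ω x) * v' x) :
    HasDerivWithinAt (fun y => ω y * (ε ^ 2 * v' y ^ 2 - W (v y)))
      (-((W (v x) + ε ^ 2 * v' x ^ 2) * dω)) s x := by
  refine (hω.mul (((hv'.pow 2).const_mul (ε ^ 2)).sub
    (hW.comp_hasDerivWithinAt x hv))).congr_deriv ?_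
  simp only [Pi.sub_apply, Pi.pow_apply, Function.comp_apply, hEL]
  field_simp
  ring

theorem first_integral_identity_general (W ω ω' v v' v'' : ℝ → ℝ) (T ε : ℝ)
    (hε : 0 < ε)
    (hW : Differentiable ℝ W)
    (hωd : ∀ t ∈ Icc (0:ℝ) T, HasDerivWithinAt ω (ω' t) (Icc 0 T) t)
    (hω'c : ContinuousOn ω' (Icc 0 T))
    (hωpos : ∀ t ∈ Icc (0:ℝ) T, 0 < ω t)
    (hvd : ∀ t ∈ Icc (0:ℝ) T, HasDerivWithinAt v (v' t) (Icc 0 T) t)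
    (hv'd : ∀ t ∈ Icc (0:ℝ) T, HasDerivWithinAt v' (v'' t) (Icc 0 T) t)
    (hEL : ∀ t ∈ Icc (0:ℝ) T,
      v'' t = deriv W (v t) / (2 * ε ^ 2) - (ω' t / ω t) * v' t) :
    ∀ t ∈ Icc (0:ℝ) T,
      (v' t) ^ 2 =
        (W (v t) +
          (1 / ω t) * (ω 0 * (ε ^ 2 * (v' 0) ^ 2 - W (v 0)) -
            ε * ∫ s in (0:ℝ)..t, ((1 / ε) * W (v s) + ε * (v' s) ^ 2) * ω' s)) / ε ^ 2 := by
  intro t ht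
  have hvc : ContinuousOn v (Icc 0 T) := fun x hx => (hvd x hx).continuousWithinAt
  have hv'c : ContinuousOn v' (Icc 0 T) := fun x hx => (hv'd x hx).continuousWithinAt
  have hsource : ContinuousOn (fun s => -((W (v s) + ε ^ 2 * v' s ^ 2) * ω' s)) (Icc 0 T) :=
    (((hW.continuous.comp_continuousOn hvc).add ((hv'c.pow 2).const_smul (ε ^ 2))).mul hω'c).neg
  have hbalance := integral_eq_sub_of_hasDerivWithinAt_Icc
    (fun x hx => hasDerivWithinAt_weighted_hamiltonian (hωd x hx) (hvd x hx) (hv'd x hx)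
      (hW (v x)).hasDerivAt (hωpos x hx).ne' hε.ne' (hEL x hx)) hsource ht
  have hscale : ε * ∫ s in (0:ℝ)..t, ((1 / ε) * W (v s) + ε * v' s ^ 2) * ω' s
      = ∫ s in (0:ℝ)..t, (W (v s) + ε ^ 2 * v' s ^ 2) * ω' s := by
    rw [← intervalIntegral.integral_const_mul]
    congr 1
    ext s
    field_simp
  rw [intervalIntegral.integral_neg] at hbalance
  rw [hscale, neg_eq_iff_eq_neg.mp hbalance]
  field_simp [(hωpos t ht).ne']
  ring

theorem first_integral_identity (W ω ω' v v' v'' : ℝ → ℝ) (T ε : ℝ)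
    (hT : 0 < T) (hε : 0 < ε)
    (hW : Differentiable ℝ W)
    (hωd : ∀ t ∈ Icc (0:ℝ) T, HasDerivWithinAt ω (ω' t) (Icc 0 T) t)
    (hω'c : ContinuousOn ω' (Icc 0 T))
    (hωpos : ∀ t ∈ Icc (0:ℝ) T, 0 < ω t)
    (hvd : ∀ t ∈ Icc (0:ℝ) T, HasDerivWithinAt v (v' t) (Icc 0 T) t)
    (hv'd : ∀ t ∈ Icc (0:ℝ) T, HasDerivWithinAt v' (v'' t) (Icc 0 T) t)
    (hv''c : ContinuousOn v'' (Icc 0 T))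
    (hEL : ∀ t ∈ Icc (0:ℝ) T,
      v'' t = deriv W (v t) / (2 * ε ^ 2) - (ω' t / ω t) * v' t) :
    ∀ t ∈ Icc (0:ℝ) T,
      (v' t) ^ 2 =
        (W (v t) +
          (1 / ω t) * (ω 0 * (ε ^ 2 * (v' 0) ^ 2 - W (v 0)) -
            ε * ∫ s in (0:ℝ)..t, ((1 / ε) * W (v s) + ε * (v' s) ^ 2) * ω' s)) / ε ^ 2 :=
  first_integral_identity_general W ω ω' v v' v'' T ε hε hW hωd hω'c hωpos hvd hv'd hEL
end

section
/- Assume (i) either α ≥ α_− > a, or ω'(0) > 0, (ii) the weight oscillation ω₁ − ω₀ is sufficiently small (resp. ω(t) ≥ ω(0) − (κ₀/2)t holds for all t). Then the constant function b is the unique minimizer of the first-order one-dimensional limiting functional G^(1)(v) = (C_W/(b−a)) ∫_I ω d|Dv| + d_W(v(0),α)ω(0) + d_W(v(T),b)ω(T) over v ∈ BV(I; {a,b}). -/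
open Real Set Filter Topology MeasureTheory intervalIntegral

/-- The geodesic distance induced by `2√W`. -/
noncomputable def dW (W : ℝ → ℝ) (r s : ℝ) : ℝ :=
  |∫ ρ in r..s, 2 * Real.sqrt (W ρ)|

/-- Energy of a `BV((0,T);{a,b})` competitor, represented by its finitely many
jump points `tj : Fin n → ℝ` and its value `s₀ ∈ {a,b}` on the first piece:
each interior jump costs `dW a b` weighted by `ω` at the jump point, and the
boundary traces `s₀` and `a + b - s₀` (if `n` is odd) pay the geodesic distance
to the boundary data `α` resp. `b`. -/
noncomputable def G1 (W ω : ℝ → ℝ) (a b α T : ℝ) (n : ℕ) (tj : Fin n → ℝ) (s₀ : ℝ) : ℝ :=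
  dW W a b * (∑ i, ω (tj i)) + dW W s₀ α * ω 0 +
    dW W (if Even n then s₀ else a + b - s₀) b * ω T

/-! A competitor with a jump at `t` pays at least `dW a b * ω t`, and the constant `a` pays at
least `dW a b * ω T`; so it suffices that `dW α b * ω 0 < dW a b * ω t` on `(0, T]`. Since
`ω 0 = 1` and `dW α b = dW a b - dW a α`, the slope condition gives this through `ω > 1` on
`(0, T]`, and small oscillation through `ω > 1 - δ`, as long as `δ * dW a b < dW a α`; for
`α ≥ αm` this holds with `δ = dW a αm / (2 * dW a b)`. -/

theorem dW_nonneg (W : ℝ → ℝ) (r s : ℝ) : 0 ≤ dW W r s := abs_nonneg _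

theorem Continuous.intervalIntegrable_two_mul_sqrt {W : ℝ → ℝ} (hW : Continuous W) (r s : ℝ) :
    IntervalIntegrable (fun ρ => 2 * √(W ρ)) volume r s :=
  (continuous_const.mul (continuous_sqrt.comp hW)).intervalIntegrable r s

theorem dW_eq_integral (W : ℝ → ℝ) {r s : ℝ} (hrs : r ≤ s) :
    dW W r s = ∫ ρ in r..s, 2 * √(W ρ) :=
  abs_of_nonneg (integral_nonneg hrs fun _ _ => by positivity)

theorem dW_add {W : ℝ → ℝ} (hW : Continuous W) {r s t : ℝ} (hrs : r ≤ s) (hst : s ≤ t) :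
    dW W r t = dW W r s + dW W s t := by
  rw [dW_eq_integral W (hrs.trans hst), dW_eq_integral W hrs, dW_eq_integral W hst,
    integral_add_adjacent_intervals (hW.intervalIntegrable_two_mul_sqrt r s)
      (hW.intervalIntegrable_two_mul_sqrt s t)]

theorem dW_pos {W : ℝ → ℝ} (hW : Continuous W) {r s : ℝ} (hrs : r < s)
    (hpos : ∀ x ∈ Ioo r s, 0 < W x) : 0 < dW W r s := by
  rw [dW_eq_integral W hrs.le]
  refine intervalIntegral_pos_of_pos_on
    (hW.intervalIntegrable_two_mul_sqrt r s) (fun x hx => ?_) hrs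
  have := hpos x hx
  positivity

theorem sub_lt_of_sSup_sub_sInf_lt {f : ℝ → ℝ} {s : Set ℝ} {δ x y : ℝ}
    (habove : BddAbove (f '' s)) (hbelow : BddBelow (f '' s))
    (hosc : sSup (f '' s) - sInf (f '' s) < δ) (hx : x ∈ s) (hy : y ∈ s) : f x - δ < f y := by
  have hsup : f x ≤ sSup (f '' s) := le_csSup habove (mem_image_of_mem f hx)
  have hinf : sInf (f '' s) ≤ f y := csInf_le hbelow (mem_image_of_mem f hy)
  linarith

theorem lt_G1_of_forall_lt_mul {W ω : ℝ → ℝ} {a b α T c : ℝ} {n : ℕ} {tj : Fin n → ℝ}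
    {s₀ : ℝ} (hT : 0 < T) (hω : ∀ t ∈ Icc 0 T, 0 ≤ ω t)
    (hjump : ∀ t ∈ Ioc 0 T, c < dW W a b * ω t) (hmem : ∀ i, tj i ∈ Ioo 0 T)
    (hs₀ : n = 0 → s₀ = a) : c < G1 W ω a b α T n tj s₀ := by
  have hterm : ∀ r s, ∀ t ∈ Icc 0 T, 0 ≤ dW W r s * ω t :=
    fun r s t ht => mul_nonneg (dW_nonneg W r s) (hω t ht)
  have h0 : 0 ∈ Icc 0 T := ⟨le_rfl, hT.le⟩
  have hT' : T ∈ Icc 0 T := ⟨hT.le, le_rfl⟩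
  unfold G1
  rcases n.eq_zero_or_pos with rfl | hn
  · obtain rfl := hs₀ rfl
    simp only [Finset.univ_eq_empty, Finset.sum_empty, mul_zero, zero_add, if_pos Even.zero]
    linarith [hjump T ⟨hT, le_rfl⟩, hterm s₀ α 0 h0]
  · have hsum : ω (tj ⟨0, hn⟩) ≤ ∑ i, ω (tj i) :=
      Finset.single_le_sum (fun i _ => hω _ (Ioo_subset_Icc_self (hmem i))) (Finset.mem_univ _)
    linarith [hjump _ (Ioo_subset_Ioc_self (hmem ⟨0, hn⟩)), hterm s₀ α 0 h0,
      hterm (if Even n then s₀ else a + b - s₀) b T hT',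
      mul_le_mul_of_nonneg_left hsum (dW_nonneg W a b)]

theorem constant_b_unique_minimizer_1d (W : ℝ → ℝ) (a b α αm κ₀ : ℝ)
    (hab : a < b) (hα : α ∈ Icc a b) (hαm : αm ∈ Ioo a b) (hκ₀ : κ₀ < 0)
    (hWc : Continuous W) (hWnn : ∀ x, 0 ≤ W x)
    (hzeros : ∀ x, W x = 0 ↔ x = a ∨ x = b) :
    ∃ δ > 0, ∀ T : ℝ, 0 < T → ∀ ω : ℝ → ℝ,
      ContinuousOn ω (Icc 0 T) → (∀ t ∈ Icc 0 T, 0 < ω t) → ω 0 = 1 →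
      ((αm ≤ α ∧ sSup (ω '' Icc 0 T) - sInf (ω '' Icc 0 T) < δ) ∨
        (∀ t ∈ Icc 0 T, ω 0 - κ₀ / 2 * t ≤ ω t)) →
      ∀ (n : ℕ) (tj : Fin n → ℝ) (s₀ : ℝ),
        (s₀ = a ∨ s₀ = b) → StrictMono tj → (∀ i, tj i ∈ Ioo 0 T) →
        ¬(n = 0 ∧ s₀ = b) →
        dW W α b * ω 0 < G1 W ω a b α T n tj s₀ := by
  have hWpos : ∀ x ∈ Ioo a b, 0 < W x := fun x hx =>
    (hWnn x).lt_of_ne' fun h => by rcases (hzeros x).1 h with rfl | rfl <;> simp at hx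
  have hd : 0 < dW W a b := dW_pos hWc hab hWpos
  have hm : 0 < dW W a αm :=
    dW_pos hWc hαm.1 fun x hx => hWpos x ⟨hx.1, hx.2.trans hαm.2⟩
  have hαb : dW W α b = dW W a b - dW W a α := by linarith [dW_add hWc hα.1 hα.2]
  refine ⟨dW W a αm / (2 * dW W a b), by positivity,
    fun T hT ω hωc hωpos hω0 hhyp n tj s₀ hs₀ _ hmem hne => ?_⟩
  refine lt_G1_of_forall_lt_mul hT (fun t ht => (hωpos t ht).le) (fun t ht => ?_) hmem
    fun hn => hs₀.resolve_right fun hb => hne ⟨hn, hb⟩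
  have htI : t ∈ Icc 0 T := Ioc_subset_Icc_self ht
  rw [hω0, mul_one, hαb]
  rcases hhyp with ⟨hαmα, hosc⟩ | hslope
  · have hK := isCompact_Icc.image_of_continuousOn hωc
    have hωt := sub_lt_of_sSup_sub_sInf_lt hK.bddAbove hK.bddBelow hosc ⟨le_rfl, hT.le⟩ htI
    have hmα : dW W a αm ≤ dW W a α := by
      linarith [dW_add hWc hαm.1.le hαmα, dW_nonneg W αm α]
    calc dW W a b - dW W a α < dW W a b * (1 - dW W a αm / (2 * dW W a b)) := by
          field_simp
          linarith
      _ < dW W a b * ω t := by rw [← hω0]; gcongr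
  · have hωt : 1 < ω t := by linarith [hslope t htI, mul_neg_of_neg_of_pos hκ₀ ht.1]
    exact (sub_le_self _ (dW_nonneg W a α)).trans_lt (lt_mul_of_one_lt_right hd hωt)
end
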